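/- arXiv:2511.22922 — 5 statements merged into one kernel-verified Lean document; each statement's English description precedes it below -/
import Mathlib

section
/- Let p be a power of two and x a positive natural number such that 0 < |p - x^2| < 4 (as integers). Then (p, x) is one of (1,2), (2,1), (2,2), (4,1), (8,3). -/
theorem pow_two_near_square (p x : ℕ) (hp : ∃ k : ℕ, p = 2 ^ k) (hx : 0 < x)
    (h1 : 0 < |(p : ℤ) - (x : ℤ) ^ 2|) (h2 : |(p : ℤ) - (x : ℤ) ^ 2| < 4) :
    (p, x) = (1, 2) ∨ (p, x) = (2, 1) ∨ (p, x) = (2, 2) ∨ (p, x) = (4, 1) ∨ (p, x) = (8, 3) := by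
  obtain ⟨k, rfl⟩ := hp
  rw [abs_pos] at h1
  rw [abs_lt] at h2
  obtain ⟨hl, hr⟩ := h2
  by_cases hk : k ≤ 2
  · -- small cases: 2^k ≤ 4, so x^2 < 8, x ≤ 2
    have hxle : x ≤ 2 := by
      by_contra hgt
      push_neg at hgt
      have : (3 : ℤ) ≤ (x : ℤ) := by exact_mod_cast hgt
      have h9 : (9 : ℤ) ≤ (x : ℤ) ^ 2 := by nlinarith
      have hp4 : (2 : ℤ) ^ k ≤ 4 := by
        calc (2 : ℤ) ^ k ≤ 2 ^ 2 := by
              apply pow_le_pow_right₀ (by norm_num) hk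
          _ = 4 := by norm_num
      push_cast at hl
      linarith
    interval_cases k <;> interval_cases x <;> simp_all <;> omega
  · push_neg at hk
    push_cast at h1 hl hr
    -- k ≥ 3 : 8 ∣ 2^k
    have h8 : (8 : ℤ) ∣ (2 : ℤ) ^ k := by
      have : (2 : ℤ) ^ 3 ∣ 2 ^ k := pow_dvd_pow 2 hk
      simpa using this
    obtain ⟨m, hm⟩ := h8
    -- x must be odd
    have hxodd : x % 2 = 1 := by
      rcases Nat.even_or_odd x with he | ho
      · obtain ⟨y, rfl⟩ := he
        exfalso
        have : ((y : ℤ) + y) ^ 2 = 4 * y ^ 2 := by ring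
        push_cast at hl hr h1
        rw [this] at hl hr h1
        omega
      · exact Nat.odd_iff.mp ho
    -- x^2 ≡ 1 mod 8
    have hsq : (8 : ℤ) ∣ (x : ℤ) ^ 2 - 1 := by
      obtain ⟨y, hy⟩ : ∃ y, x = 2 * y + 1 := ⟨x / 2, by omega⟩
      subst hy
      have h2d : 2 ∣ y * (y + 1) := (Nat.even_mul_succ_self y).two_dvd
      obtain ⟨z, hz⟩ := h2d
      have : (y : ℤ) * (y + 1) = 2 * z := by exact_mod_cast hz
      push_cast
      refine ⟨z, by nlinarith⟩
    obtain ⟨s, hs⟩ := hsq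
    -- conclude 2^k = x^2 - 1, i.e. d = -1
    have hd : (2 : ℤ) ^ k = (x : ℤ) ^ 2 - 1 := by
      rw [hm] at hl hr h1 ⊢
      omega
    -- now in ℕ: (x-1)(x+1) = 2^k
    have hx2 : 2 ^ k = x ^ 2 - 1 := by
      have hx1 : 1 ≤ x ^ 2 := Nat.one_le_iff_ne_zero.mpr (pow_ne_zero 2 (by omega))
      have : ((2 : ℕ) ^ k : ℤ) = ((x ^ 2 - 1 : ℕ) : ℤ) := by
        push_cast [hx1]
        linarith
      exact_mod_cast this
    have hfac : (x - 1) * (x + 1) = 2 ^ k := by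
      cases x with
      | zero => omega
      | succ n => simp [Nat.succ_sub_one] at hx2 ⊢; ring_nf; ring_nf at hx2; omega
    have hd1 : (x - 1) ∣ 2 ^ k := ⟨x + 1, hfac.symm⟩
    have hd2 : (x + 1) ∣ 2 ^ k := ⟨x - 1, by rw [mul_comm]; exact hfac.symm⟩
    obtain ⟨a, ha, hae⟩ := (Nat.dvd_prime_pow Nat.prime_two).mp hd1
    obtain ⟨b, hb, hbe⟩ := (Nat.dvd_prime_pow Nat.prime_two).mp hd2
    -- x ≥ 3 since x odd and x^2 = 2^k + 1 ≥ 9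
    have hx3 : 3 ≤ x := by
      have h8k : 8 ≤ 2 ^ k := by
        calc (8 : ℕ) = 2 ^ 3 := by norm_num
          _ ≤ 2 ^ k := Nat.pow_le_pow_right (by norm_num) hk
      nlinarith [hx2, sq_nonneg x]
    -- 2^b = 2^a + 2
    have hba : 2 ^ b = 2 ^ a + 2 := by omega
    have ha1 : a = 1 := by
      -- a ≥ 1 since x - 1 even; 2^a ∣ 2
      have haev : 2 ∣ 2 ^ a := by rw [← hae]; omega
      have h1a : 1 ≤ a := by
        by_contra h
        interval_cases a <;> omega
      have h2b : 2 ≤ b := by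
        by_contra h
        push_neg at h
        interval_cases b <;> [omega; (have := Nat.one_le_two_pow (n := a); omega)]
      -- 2^a ∣ 2^b and 2^a ∣ 2^a so 2^a ∣ 2
      have hdvd2 : 2 ^ a ∣ 2 := by
        have hab : a ≤ b := by
          by_contra h
          push_neg at h
          have := Nat.pow_le_pow_right (show 1 ≤ 2 by norm_num) (le_of_lt h)
          omega
        have hdab : (2 : ℕ) ^ a ∣ 2 ^ b := pow_dvd_pow 2 hab
        rw [hba] at hdab
        exact (Nat.dvd_add_right (dvd_refl (2 ^ a))).mp hdab
      have hle2 : 2 ^ a ≤ 2 := Nat.le_of_dvd (by norm_num) hdvd2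
      have : a ≤ 1 := by
        by_contra h
        push_neg at h
        have h4 : (4 : ℕ) ∣ 2 ^ a := by
          calc (4 : ℕ) = 2 ^ 2 := by norm_num
            _ ∣ 2 ^ a := pow_dvd_pow 2 h
        omega
      omega
    have hxe : x = 3 := by
      subst ha1
      omega
    subst hxe
    have hk3 : (2 : ℕ) ^ k = 8 := by omega
    have : k = 3 := Nat.pow_right_injective (by norm_num) (show 2 ^ k = 2 ^ 3 by omega)
    subst this
    simp
end

section
/- Let p be a power of two with p ≥ 2, and let x and y be natural numbers with x > 1 and y > 1 satisfying y^2 - 1 = p^2 * (x^2 - 1). Then x = p / 2 and y = p^2 / 2 - 1. -/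
set_option maxHeartbeats 1000000

theorem pell_like_pow_two (p x y : ℕ) (hp : ∃ k : ℕ, p = 2 ^ k) (hp2 : 2 ≤ p)
    (hx : 1 < x) (hy : 1 < y) (h : y ^ 2 - 1 = p ^ 2 * (x ^ 2 - 1)) :
    x = p / 2 ∧ y = p ^ 2 / 2 - 1 := by
  obtain ⟨k, hk⟩ := hp
  rcases k with _ | K
  · simp at hk; omega
  -- basic facts
  have hx2 : 1 ≤ x ^ 2 := Nat.one_le_pow _ _ (by omega)
  have hy2 : 1 ≤ y ^ 2 := Nat.one_le_pow _ _ (by omega)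
  obtain ⟨c, hc⟩ := Nat.exists_eq_add_of_le hy2
  obtain ⟨d, hd⟩ := Nat.exists_eq_add_of_le hx2
  have h1 : y ^ 2 + p ^ 2 = p ^ 2 * x ^ 2 + 1 := by
    rw [hc, hd] at h
    simp [Nat.add_sub_cancel_left] at h
    rw [hc, hd, h]; ring
  have hZ : (y : ℤ) ^ 2 + (p : ℤ) ^ 2 = (p : ℤ) ^ 2 * (x : ℤ) ^ 2 + 1 := by
    exact_mod_cast h1
  have hpZ : (p : ℤ) = 2 ^ (K + 1) := by exact_mod_cast hk
  have hxZ : (2 : ℤ) ≤ (x : ℤ) := by exact_mod_cast hx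
  have hyZ : (2 : ℤ) ≤ (y : ℤ) := by exact_mod_cast hy
  have hpZ2 : (2 : ℤ) ≤ (p : ℤ) := by exact_mod_cast hp2
  have hfac : ((p : ℤ) * x - y) * ((p : ℤ) * x + y) = (p : ℤ) ^ 2 - 1 := by
    linear_combination (-1 : ℤ) * hZ
  have hspos : (0 : ℤ) < (p : ℤ) * x + y := by nlinarith
  have hapos : (0 : ℤ) < (p : ℤ) * x - y := by
    rcases lt_or_ge 0 ((p : ℤ) * x - y) with h' | h'
    · exact h'
    · exfalso
      nlinarith [mul_nonpos_of_nonpos_of_nonneg h' hspos.le]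
  have hub : (p : ℤ) * x - y < (p : ℤ) := by
    by_contra h'
    push_neg at h'
    have h1' : ((p:ℤ) * x - y) * ((p:ℤ) * x - y) ≤ ((p:ℤ) * x - y) * ((p:ℤ) * x + y) := by
      nlinarith
    have h2' : (p:ℤ) * (p:ℤ) ≤ ((p:ℤ) * x - y) * ((p:ℤ) * x - y) :=
      mul_le_mul h' h' (by linarith) (by linarith)
    nlinarith
  have hyx : y ≤ p * x := by
    have : (y : ℤ) ≤ (p : ℤ) * x := by linarith
    exact_mod_cast this
  obtain ⟨A, hA⟩ : ∃ A, A = p * x - y := ⟨_, rfl⟩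
  have hAZ : (A : ℤ) = (p : ℤ) * x - y := by
    rw [hA, Nat.cast_sub hyx]; push_cast; ring
  have hA1 : 1 ≤ A := by
    have : (0 : ℤ) < (A : ℤ) := by rw [hAZ]; exact hapos
    exact_mod_cast this
  have hAub : A < p := by
    have : (A : ℤ) < (p : ℤ) := by rw [hAZ]; exact hub
    exact_mod_cast this
  -- A is odd: it divides the odd number p^2 - 1
  have hAdvdN : A * (p * x + y) = p ^ 2 - 1 := by
    have hcast : ((A * (p * x + y) : ℕ) : ℤ) = (((p ^ 2 - 1 : ℕ)) : ℤ) := by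
      rw [Nat.cast_sub (Nat.one_le_pow 2 p (by omega))]
      push_cast
      rw [hAZ]
      linear_combination hfac
    exact_mod_cast hcast
  have hp2e : p ^ 2 = 2 ^ (2 * K + 2) := by rw [hk]; ring
  have hAodd : Odd A := by
    rcases Nat.even_or_odd A with ⟨m, hm⟩ | ho
    · exfalso
      have h4 : 2 * (m * (p * x + y)) = p ^ 2 - 1 := by
        rw [← hAdvdN, hm]; ring
      have heven : Even (p ^ 2 - 1) := ⟨m * (p * x + y), by rw [← h4]; ring⟩
      have hodd : Odd (p ^ 2 - 1) :=
        Nat.Even.sub_odd (Nat.one_le_pow 2 p (by omega))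
          (by rw [hp2e]; exact ⟨2 ^ (2 * K + 1), by ring⟩) odd_one
      exact ((Nat.not_odd_iff_even.mpr heven)) hodd
    · exact ho
  obtain ⟨b, hb⟩ := hAodd
  -- key divisibility: 2^(K+2) ∣ A^2 - 1, i.e. 2^K ∣ b*(b+1)
  have hQp : (p : ℤ) = 2 * 2 ^ K := by rw [hpZ]; ring
  have keyZ : ((A : ℤ)) ^ 2 - 1 = 4 * 2 ^ K * ((x : ℤ) * A - 2 ^ K) := by
    have hZ' := hZ
    rw [hQp] at hZ'
    rw [hAZ, hQp]
    linear_combination hZ'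
  have hdvdZ : (2 : ℤ) ^ K ∣ (b : ℤ) * (b + 1) := by
    refine ⟨(x : ℤ) * A - 2 ^ K, ?_⟩
    have hbZ : (A : ℤ) = 2 * b + 1 := by exact_mod_cast hb
    have h4 : (4 : ℤ) * ((b:ℤ) * (b+1)) = 4 * (2 ^ K * ((x : ℤ) * A - 2 ^ K)) := by
      have h5 : ((A : ℤ)) ^ 2 - 1 = 4 * ((b:ℤ) * (b+1)) := by rw [hbZ]; ring
      rw [← h5, keyZ]; ring
    linarith
  have hdvdN : 2 ^ K ∣ b * (b + 1) := by exact_mod_cast hdvdZ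
  have hbub : b < 2 ^ K := by
    have hp2K : p = 2 * 2 ^ K := by rw [hk]; ring
    omega
  have hsplit : 2 ^ K ∣ b ∨ 2 ^ K ∣ (b + 1) := by
    rcases Nat.even_or_odd b with he | ho
    · left
      have hcop : Nat.Coprime (2 ^ K) (b + 1) := by
        apply Nat.Coprime.pow_left
        rw [Nat.coprime_two_left]
        exact Even.add_one he
      exact hcop.dvd_of_dvd_mul_right hdvdN
    · right
      have hcop : Nat.Coprime (2 ^ K) b := by
        apply Nat.Coprime.pow_left
        rw [Nat.coprime_two_left]
        exact ho
      exact hcop.dvd_of_dvd_mul_left hdvdN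
  have hAcase : A = 1 ∨ A = p - 1 := by
    rcases hsplit with hd1 | hd2
    · left
      have : b = 0 := by
        rcases Nat.eq_zero_or_pos b with h0 | h0
        · exact h0
        · exact absurd (Nat.le_of_dvd h0 hd1) (by omega)
      omega
    · right
      have : b + 1 = 2 ^ K := le_antisymm (by omega) (Nat.le_of_dvd (by omega) hd2)
      have hp2K : p = 2 * 2 ^ K := by rw [hk]; ring
      omega
  rcases hAcase with hA1' | hA2'
  · -- good case: p*x - y = 1
    have ha : (p : ℤ) * x - y = 1 := by rw [← hAZ, hA1']; norm_num
    have hs : (p : ℤ) * x + y = (p : ℤ) ^ 2 - 1 := by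
      have := hfac
      rw [ha, one_mul] at this
      exact this
    have h2x : 2 * (p * x) = p ^ 2 := by
      have : (2 : ℤ) * ((p:ℤ) * x) = (p : ℤ) ^ 2 := by linarith
      exact_mod_cast this
    have h2y : 2 * y + 2 = p ^ 2 := by
      have : (2 : ℤ) * y + 2 = (p : ℤ) ^ 2 := by linarith
      exact_mod_cast this
    have hxp : 2 * x = p := by
      have hpp : p * (2 * x) = p * p := by
        calc p * (2 * x) = 2 * (p * x) := by ring
          _ = p ^ 2 := h2x
          _ = p * p := by ring
      exact Nat.eq_of_mul_eq_mul_left (by omega) hpp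
    constructor
    · omega
    · obtain ⟨q, hq⟩ : ∃ q, q = p ^ 2 := ⟨_, rfl⟩
      rw [← hq] at h2y ⊢
      omega
  · -- excluded case: p*x - y = p - 1 forces y = 1
    exfalso
    have ha : (A : ℤ) = (p : ℤ) - 1 := by
      rw [hA2', Nat.cast_sub (by omega)]; norm_num
    have ha' : (p : ℤ) * x - y = (p : ℤ) - 1 := by rw [← hAZ, ha]
    have hcancel : (p : ℤ) * x + y = (p : ℤ) + 1 := by
      have hne : (p : ℤ) - 1 ≠ 0 := by linarith
      have h6 : ((p:ℤ) - 1) * ((p : ℤ) * x + y) = ((p:ℤ) - 1) * ((p:ℤ) + 1) := by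
        linear_combination hfac - ((p:ℤ) * x + y) * ha'
      exact mul_left_cancel₀ hne h6
    have : (y : ℤ) = 1 := by linarith
    linarith
end

section
/- Let n and m be powers of two with n ≥ m ≥ 2, and let x be a natural number such that n + m - 1 = x^2. Then (n, m, x) = (8, 2, 3). -/
/-!
Write `n = 2 ^ a` and `m = 2 ^ b` with `1 ≤ b ≤ a`. If `b ≥ 2` then `4 ∣ x ^ 2 + 1`, which no square
allows modulo 4; so `m = 2` and `x ^ 2 = 2 ^ a + 1`. Then `x = 2c + 1` is odd and `c (c + 1)` divides a
power of two; one of the two consecutive factors is odd, hence equal to `1`, which forces `c = 1`.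
-/

theorem Nat.not_four_dvd_sq_add_one (x : ℕ) : ¬ 4 ∣ x ^ 2 + 1 := by
  intro h
  have hx : (x : ZMod 4) ^ 2 + 1 = 0 := by
    exact_mod_cast (ZMod.natCast_eq_zero_iff _ 4).2 h
  generalize (x : ZMod 4) = y at hx
  revert y
  decide

theorem Nat.eq_one_of_mul_succ_dvd_two_pow {c k : ℕ} (h : c * (c + 1) ∣ 2 ^ k) : c = 1 := by
  rcases Nat.even_or_odd c with hc | hc
  · have hc1 : c + 1 = 1 :=
      ((Nat.coprime_two_right.2 hc.add_one).pow_right k).eq_one_of_dvd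
        ((Dvd.intro_left _ rfl).trans h)
    obtain rfl : c = 0 := by omega
    simp at h
  · exact ((Nat.coprime_two_right.2 hc).pow_right k).eq_one_of_dvd
      ((Dvd.intro _ rfl).trans h)

theorem Nat.eq_three_of_sq_eq_two_pow_add_one {x a : ℕ} (h : x ^ 2 = 2 ^ a + 1) : x = 3 ∧ a = 3 := by
  have hx : Odd x := by
    rcases a with _ | a
    · exact absurd ⟨x, h⟩ (Nat.not_exists_sq' (m := 1) (by norm_num) (by norm_num))
    · rw [← Nat.odd_pow_iff two_ne_zero, h]
      exact (Nat.even_pow.2 ⟨even_two, a.succ_ne_zero⟩).add_one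
  obtain ⟨c, rfl⟩ := hx
  have hc : 4 * (c * (c + 1)) = 2 ^ a := by
    linarith [(by ring : (2 * c + 1) ^ 2 = 4 * (c * (c + 1)) + 1)]
  obtain rfl : c = 1 := Nat.eq_one_of_mul_succ_dvd_two_pow (Dvd.intro_left _ hc)
  exact ⟨rfl, Nat.pow_right_injective le_rfl (hc.symm.trans (by norm_num) : 2 ^ a = 2 ^ 3)⟩

theorem pow_two_add_pow_two_sub_one_sq (n m x : ℕ) (hn : ∃ k : ℕ, n = 2 ^ k)
    (hm : ∃ k : ℕ, m = 2 ^ k) (hnm : m ≤ n) (hm2 : 2 ≤ m)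
    (h : n + m - 1 = x ^ 2) :
    (n, m, x) = (8, 2, 3) := by
  obtain ⟨a, rfl⟩ := hn
  obtain ⟨b, rfl⟩ := hm
  have hb0 : b ≠ 0 := Nat.one_lt_two_pow_iff.1 hm2
  have hba : b ≤ a := (Nat.pow_le_pow_iff_right one_lt_two).1 hnm
  obtain rfl : b = 1 := by
    by_contra hb
    have h4 : 2 ^ 2 ∣ 2 ^ a + 2 ^ b :=
      dvd_add (pow_dvd_pow 2 (by omega : 2 ≤ a)) (pow_dvd_pow 2 (by omega : 2 ≤ b))
    rw [← Nat.sub_add_cancel (Nat.one_le_two_pow.trans (Nat.le_add_left _ _)), h] at h4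
    exact Nat.not_four_dvd_sq_add_one x h4
  obtain ⟨rfl, rfl⟩ := Nat.eq_three_of_sq_eq_two_pow_add_one (by omega : x ^ 2 = 2 ^ a + 1)
  rfl
end

section
/- Let n and m be powers of two with m ≥ 2, and let x be a natural number such that n - m - 1 = x^2 (as integers). Then (n, m, x) = (4, 2, 1). -/
theorem pow_two_sub_pow_two_sub_one_sq (n m x : ℕ) (hn : ∃ k : ℕ, n = 2 ^ k)
    (hm : ∃ k : ℕ, m = 2 ^ k) (hm2 : 2 ≤ m)
    (h : (n : ℤ) - (m : ℤ) - 1 = (x : ℤ) ^ 2) :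
    (n, m, x) = (4, 2, 1) := by
  obtain ⟨a, ha⟩ := hn
  obtain ⟨b, hb⟩ := hm
  have hcast : ((x ^ 2 : ℕ) : ℤ) = (x : ℤ) ^ 2 := by push_cast; ring
  rw [← hcast] at h
  have h' : n = x ^ 2 + m + 1 := by omega
  have hsq4 : x ^ 2 % 4 = 0 ∨ x ^ 2 % 4 = 1 := by
    rcases Nat.even_or_odd x with ⟨t, ht⟩ | ⟨t, ht⟩
    · have : x ^ 2 = 4 * t ^ 2 := by subst ht; ring
      omega
    · have : x ^ 2 = 4 * (t ^ 2 + t) + 1 := by subst ht; ring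
      omega
  have hb1 : 1 ≤ b := by
    by_contra hc
    interval_cases b <;> omega
  have hn4 : 4 ≤ n := by
    rcases Nat.lt_or_ge a 2 with h2 | h2
    · interval_cases a <;> omega
    · have : 2 ^ 2 ≤ 2 ^ a := Nat.pow_le_pow_right (by norm_num) h2
      omega
  have ha2 : 2 ≤ a := by
    by_contra hc
    have : a ≤ 1 := by omega
    interval_cases a <;> omega
  have hdvd4n : 4 ∣ n := by
    have h4 := pow_dvd_pow 2 ha2
    rw [ha]
    simpa using h4
  have hbeq : b = 1 := by
    by_contra hc
    have hb2 : 2 ≤ b := by omega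
    have hdvd4m : 4 ∣ m := by
      have h4 := pow_dvd_pow 2 hb2
      rw [hb]
      simpa using h4
    omega
  have hm' : m = 2 := by simp [hb, hbeq]
  have ha3 : a = 2 := by
    by_contra hc
    have ha3' : 3 ≤ a := by omega
    have hdvd8n : 8 ∣ n := by
      have h8 := pow_dvd_pow 2 ha3'
      rw [ha]
      simpa using h8
    rcases Nat.even_or_odd x with ⟨t, ht⟩ | ⟨t, ht⟩
    · have : x ^ 2 = 4 * t ^ 2 := by subst ht; ring
      omega
    · obtain ⟨s, hs⟩ := Nat.even_mul_succ_self t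
      have hx2 : x ^ 2 = 4 * (t * (t + 1)) + 1 := by subst ht; ring
      omega
  have hneq : n = 4 := by simp [ha, ha3]
  have hx1 : x = 1 := by
    have hx2 : x ^ 2 = 1 := by omega
    rcases Nat.lt_or_ge x 2 with h2 | h2
    · interval_cases x <;> omega
    · have : 2 ^ 2 ≤ x ^ 2 := Nat.pow_le_pow_left h2 2
      omega
  simp [hneq, hm', hx1]
end

section
/- Let n be a power of two and x a natural number such that n - 7 = x^2 (as integers, so n ≥ 7). Then n is one of 8, 16, 32, 128, 32768. -/
private def b : ℕ → ℤ
  | 0 => 0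
  | 1 => 1
  | n+2 => b (n+1) - 2 * b n

private def v (n : ℕ) : ℤ := 2 * b (n+1) - b n

private lemma b_rec (n : ℕ) : b (n+2) = b (n+1) - 2 * b n := rfl

private lemma odd_b : ∀ n, Odd (b (n+1))
  | 0 => ⟨0, rfl⟩
  | 1 => ⟨0, rfl⟩
  | n+2 => by
    obtain ⟨a, ha⟩ := odd_b n
    obtain ⟨c, hc⟩ := odd_b (n+1)
    exact ⟨c - 2*a - 1, by show b (n+1+1) - 2 * b (n+1) = _; omega⟩

private lemma v_rec (j : ℕ) : 2 * v (j+1) = v j - 7 * b j := by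
  show 2 * (2 * b (j+1+1) - b (j+1)) = _
  rw [show j+1+1 = j+2 from rfl, b_rec]
  simp only [v]; ring

private lemma vb_sum (j : ℕ) : v j + b j = 2 * b (j+1) := by simp only [v]; ring

private lemma parity_helper (x y : ℤ) (hx : x % 2 = 1) (hy : y % 2 = 1)
    (h : (16:ℤ) ∣ x^2 + 7*y^2) : (y - x) % 8 = 4 ∨ (x + y) % 8 = 4 := by
  obtain ⟨w, hw⟩ := h
  obtain ⟨r, hr0, hr16, hrodd, a, ha⟩ :
      ∃ r, 0 ≤ r ∧ r < 16 ∧ r % 2 = 1 ∧ ∃ a, x = 16*a + r :=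
    ⟨x % 16, by omega, by omega, by omega, x/16, by omega⟩
  obtain ⟨s, hs0, hs16, hsodd, c, hc⟩ :
      ∃ s, 0 ≤ s ∧ s < 16 ∧ s % 2 = 1 ∧ ∃ c, y = 16*c + s :=
    ⟨y % 16, by omega, by omega, by omega, y/16, by omega⟩
  have e : x^2 + 7*y^2 = 16*(16*(a*a) + 2*(a*r) + 112*(c*c) + 14*(c*s)) + (r*r + 7*(s*s)) := by
    rw [ha, hc]; ring
  interval_cases r <;> interval_cases s <;> omega

private lemma descent : ∀ j : ℕ, ∀ x y : ℤ, x % 2 = 1 → y % 2 = 1 →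
    x^2 + 7*y^2 = 2^(j+3) →
    (x = v (j+1) ∨ x = -v (j+1)) ∧ (y = b (j+1) ∨ y = -b (j+1))
  | 0 => by
    intro x y hx hy hxy
    norm_num at hxy
    have hv1 : v 1 = 1 := by decide
    have hb1 : b 1 = 1 := by decide
    rw [hv1, hb1]
    have hx1 : x ≠ 0 := by omega
    have hy1 : y ≠ 0 := by omega
    have hx2 : 1 ≤ x^2 := by rcases lt_or_gt_of_ne hx1 with h|h <;> nlinarith
    have hy2 : 1 ≤ y^2 := by rcases lt_or_gt_of_ne hy1 with h|h <;> nlinarith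
    have ex : (x-1)*(x+1) = 0 := by nlinarith
    have ey : (y-1)*(y+1) = 0 := by nlinarith
    constructor
    · rcases mul_eq_zero.mp ex with h|h
      · left; omega
      · right; omega
    · rcases mul_eq_zero.mp ey with h|h
      · left; omega
      · right; omega
  | j+1 => by
    intro x y hx hy hxy
    rw [show j+1+3 = j+4 from rfl] at hxy
    show (x = v (j+2) ∨ x = -v (j+2)) ∧ (y = b (j+2) ∨ y = -b (j+2))
    have h16 : (16:ℤ) ∣ x^2 + 7*y^2 := by
      rw [hxy, show j+4 = j+3+1 from rfl, pow_succ, show j+3 = j+2+1 from rfl, pow_succ,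
        show j+2 = j+1+1 from rfl, pow_succ, show j+1 = j+0+1 from rfl, pow_succ]
      exact ⟨2^(j+0), by ring⟩
    have h2 : (2:ℤ)^(j+4) = 2*2^(j+3) := by ring
    have hv : 2 * v (j+2) = v (j+1) - 7 * b (j+1) := v_rec (j+1)
    have hs : v (j+1) + b (j+1) = 2 * b (j+2) := vb_sum (j+1)
    obtain ⟨p1, hp1⟩ := odd_b j
    have hob2 : Odd (b (j+2)) := odd_b (j+1)
    obtain ⟨p2, hp2⟩ := hob2
    rcases parity_helper x y hx hy h16 with hc | hc
    · -- case A : y - x = 4t, t odd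
      obtain ⟨t, ht, htodd⟩ : ∃ t, y - x = 4*t ∧ t % 2 = 1 := ⟨(y-x)/4, by omega, by omega⟩
      have px : x = y - 4*t := by omega
      have e4 : 2*((2*y - t)^2 + 7*t^2) = 2*2^(j+3) := by
        rw [← h2, ← hxy, px]; ring
      have e3 : (2*y - t)^2 + 7*t^2 = 2^(j+3) := by linarith
      obtain ⟨ihx, ihy⟩ := descent j (2*y - t) t (by omega) htodd e3
      rcases ihx with h1|h1 <;> rcases ihy with h2'|h2' <;>
        constructor <;> omega
    · -- case B : x + y = 4s, s odd
      obtain ⟨t, ht, htodd⟩ : ∃ t, x + y = 4*t ∧ t % 2 = 1 := ⟨(x+y)/4, by omega, by omega⟩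
      have px : x = 4*t - y := by omega
      have e4 : 2*((t - 2*y)^2 + 7*t^2) = 2*2^(j+3) := by
        rw [← h2, ← hxy, px]; ring
      have e3 : (t - 2*y)^2 + 7*t^2 = 2^(j+3) := by linarith
      obtain ⟨ihx, ihy⟩ := descent j (t - 2*y) t (by omega) htodd e3
      rcases ihx with h1|h1 <;> rcases ihy with h2'|h2' <;>
        constructor <;> omega

private def z : ℤ√(-7) := ⟨1, 1⟩
private def c (n : ℕ) : ℤ := (z^n).re
private def d (n : ℕ) : ℤ := (z^n).im

private lemma c_zero : c 0 = 1 := rfl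
private lemma d_zero : d 0 = 0 := rfl

private lemma c_rec (n : ℕ) : c (n+1) = c n - 7 * d n := by
  simp [c, d, pow_succ, Zsqrtd.re_mul, z]; ring
private lemma d_rec (n : ℕ) : d (n+1) = c n + d n := by
  simp [c, d, pow_succ, Zsqrtd.im_mul, z]

private lemma cd_mod7 : ∀ n : ℕ, c n % 7 = 1 ∧ d n % 7 = (n : ℤ) % 7
  | 0 => by decide
  | n+1 => by
    obtain ⟨h1, h2⟩ := cd_mod7 n
    rw [c_rec, d_rec]
    push_cast
    omega

private lemma norm_cd : ∀ n : ℕ, c n ^ 2 + 7 * d n ^ 2 = 8 ^ n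
  | 0 => by decide
  | n+1 => by
    have ih := norm_cd n
    rw [c_rec, d_rec, pow_succ]
    linear_combination 8 * ih

private lemma d_add (p q : ℕ) : d (p + q) = c p * d q + d p * c q := by
  simp [c, d, pow_add, Zsqrtd.im_mul]

private lemma d_seven (n : ℕ) :
    d (7 * n) = 7 * d n * (c n^6 - 35 * c n^4 * d n^2 + 147 * c n^2 * d n^4 - 49 * d n^6) := by
  have h : z ^ (7 * n) = (z^n)^7 := by rw [pow_mul']
  have : d (7*n) = ((z^n)^7).im := by rw [d, h]
  rw [this]
  have hc : (z^n).re = c n := rfl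
  have hd : (z^n).im = d n := rfl
  simp only [pow_succ, pow_zero, one_mul, Zsqrtd.im_mul, Zsqrtd.re_mul, hc, hd]
  ring

private lemma seven_dvd : ∀ t : ℕ, (7:ℤ) ∣ 8^t - 1
  | 0 => by norm_num
  | t+1 => by
    obtain ⟨w, hw⟩ := seven_dvd t
    exact ⟨8*w + 1, by rw [pow_succ]; linarith⟩

private lemma lte7 : ∀ e : ℕ, ∀ t : ℕ, 7^e ∣ t → (7:ℤ)^(e+1) ∣ 8^t - 1
  | 0 => fun t _ => by simpa using seven_dvd t
  | e+1 => fun t hdvd => by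
    have h7t : 7 ∣ t := dvd_trans (dvd_pow_self 7 (Nat.succ_ne_zero e)) hdvd
    obtain ⟨u, rfl⟩ := h7t
    have hu : 7^e ∣ u := by
      have := hdvd
      rw [pow_succ'] at this
      exact (mul_dvd_mul_iff_left (by norm_num : (7:ℕ) ≠ 0)).mp this
    have ih := lte7 e u hu
    have hX : (8:ℤ)^(7*u) = ((8:ℤ)^u)^7 := by rw [pow_mul']
    set X := (8:ℤ)^u with hXdef
    have factor : X^7 - 1 = (X - 1) * (X^6 + X^5 + X^4 + X^3 + X^2 + X + 1) := by ring
    have hsum : (7:ℤ) ∣ X^6 + X^5 + X^4 + X^3 + X^2 + X + 1 := by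
      have d6 : (7:ℤ) ∣ X^6 - 1 := by rw [hXdef, ← pow_mul]; exact seven_dvd (u*6)
      have d5 : (7:ℤ) ∣ X^5 - 1 := by rw [hXdef, ← pow_mul]; exact seven_dvd (u*5)
      have d4 : (7:ℤ) ∣ X^4 - 1 := by rw [hXdef, ← pow_mul]; exact seven_dvd (u*4)
      have d3 : (7:ℤ) ∣ X^3 - 1 := by rw [hXdef, ← pow_mul]; exact seven_dvd (u*3)
      have d2 : (7:ℤ) ∣ X^2 - 1 := by rw [hXdef, ← pow_mul]; exact seven_dvd (u*2)
      have d1 : (7:ℤ) ∣ X - 1 := by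
        have := seven_dvd u; rwa [← hXdef] at this
      have : X^6 + X^5 + X^4 + X^3 + X^2 + X + 1 =
          (X^6-1) + (X^5-1) + (X^4-1) + (X^3-1) + (X^2-1) + (X-1) + 7 := by ring
      rw [this]
      exact dvd_add (dvd_add (dvd_add (dvd_add (dvd_add (dvd_add d6 d5) d4) d3) d2) d1) ⟨1, rfl⟩
    rw [hX, factor, pow_succ]
    exact mul_dvd_mul ih hsum

private lemma d_val : ∀ e : ℕ, ∀ u : ℕ, ∃ E : ℤ, d (7^e * u) = 7^e * d u * E ∧ E % 7 = 1
  | 0 => fun u => ⟨1, by simp⟩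
  | e+1 => fun u => by
    obtain ⟨E, hE, hE7⟩ := d_val e u
    set N := 7^e * u with hN
    have hidx : 7^(e+1) * u = 7 * N := by rw [hN, pow_succ]; ring
    have h7 := d_seven N
    set F := c N^6 - 35 * c N^4 * d N^2 + 147 * c N^2 * d N^4 - 49 * d N^6 with hF
    have hc7 : c N % 7 = 1 := (cd_mod7 N).1
    have hF7 : F % 7 = 1 := by
      have e1 : F = c N^6 + 7 * (-5 * c N^4 * d N^2 + 21 * c N^2 * d N^4 - 7 * d N^6) := by
        rw [hF]; ring
      rw [e1, Int.add_mul_emod_self_left]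
      have h1 : c N ≡ 1 [ZMOD 7] := by unfold Int.ModEq; simpa using hc7
      have h2 : c N ^ 6 ≡ 1 ^ 6 [ZMOD 7] := h1.pow 6
      simpa [Int.ModEq] using h2
    refine ⟨E * F, ?_, ?_⟩
    · rw [hidx, h7, hE, pow_succ]; ring
    · rw [Int.mul_emod, hE7, hF7]; norm_num

private lemma bridge : ∀ n : ℕ, c (n+1) = 2^n * v (n+1) ∧ d (n+1) = 2^n * b (n+1)
  | 0 => by decide
  | n+1 => by
    obtain ⟨ihc, ihd⟩ := bridge n
    show c (n+2) = 2^(n+1) * v (n+2) ∧ d (n+2) = 2^(n+1) * b (n+2)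
    have hcr : c (n+2) = c (n+1) - 7 * d (n+1) := c_rec (n+1)
    have hdr : d (n+2) = c (n+1) + d (n+1) := d_rec (n+1)
    have hv : 2 * v (n+2) = v (n+1) - 7 * b (n+1) := v_rec (n+1)
    have hs : v (n+1) + b (n+1) = 2 * b (n+2) := vb_sum (n+1)
    constructor
    · rw [hcr, ihc, ihd, pow_succ]
      linear_combination -((2:ℤ)^n) * hv
    · rw [hdr, ihc, ihd, pow_succ]
      linear_combination (2:ℤ)^n * hs

private lemma b_mod8 : ∀ i : ℕ, b (2*i+3) % 8 = 7 ∧ b (2*i+4) % 8 = 5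
  | 0 => by decide
  | i+1 => by
    obtain ⟨h1, h2⟩ := b_mod8 i
    have r1 : b (2*i+5) = b (2*i+4) - 2 * b (2*i+3) := b_rec (2*i+3)
    have r2 : b (2*i+6) = b (2*i+5) - 2 * b (2*i+4) := b_rec (2*i+4)
    constructor
    · rw [show 2*(i+1)+3 = 2*i+5 from by ring]; omega
    · rw [show 2*(i+1)+4 = 2*i+6 from by ring]; omega

private lemma part1 : ∀ m : ℕ, b m = 1 → m = 1 ∨ m = 2 := by
  intro m hb
  rcases Nat.lt_or_ge m 3 with h|h
  · interval_cases m
    · exact absurd hb (by decide)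
    · left; rfl
    · right; rfl
  · exfalso
    obtain ⟨i, hi⟩ : ∃ i, m = 2*i+3 ∨ m = 2*i+4 := ⟨(m-3)/2, by omega⟩
    obtain ⟨g1, g2⟩ := b_mod8 i
    rcases hi with rfl|rfl <;> omega

private lemma two_pow_mod7 (t : ℕ) : (2:ℤ)^t % 7 = 2^(t % 3) % 7 := by
  obtain ⟨q, r, hr, rfl⟩ : ∃ q r, r < 3 ∧ t = 3*q + r := ⟨t/3, t%3, by omega, by omega⟩
  have h8 : (8:ℤ)^q % 7 = 1 := by have := seven_dvd q; omega
  have he : (2:ℤ)^(3*q+r) = 8^q * 2^r := by rw [pow_add, pow_mul]; norm_num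
  rw [show (3*q+r) % 3 = r from by omega, he, Int.mul_emod, h8, one_mul,
    Int.emod_emod_of_dvd _ (dvd_refl 7)]

private lemma uniq (p q : ℕ) (hp1 : 1 ≤ p) (hpq : p < q) (hbp : b p = -1) (hbq : b q = -1)
    (hmod : q % 21 = p % 21) : False := by
  have h21 : 21 ∣ q - p := (Nat.modEq_iff_dvd' (le_of_lt hpq)).mp hmod.symm
  obtain ⟨p', rfl⟩ : ∃ p', p = p'+1 := ⟨p-1, by omega⟩
  set h := q - (p'+1) with hh
  have hq : q = (p'+1) + h := by omega
  have hhpos : h ≠ 0 := by omega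
  -- d values
  have dp : d (p'+1) = -2^p' := by
    have := (bridge p').2; rw [this, hbp]; ring
  have dq : d ((p'+1) + h) = -(2^p' * 2^h) := by
    have hb2 : b ((p'+h)+1) = -1 := by rw [show (p'+h)+1 = q from by omega]; exact hbq
    have := (bridge (p'+h)).2
    rw [show (p'+1) + h = (p'+h)+1 from by omega, this, hb2, pow_add]; ring
  -- e = 7-adic valuation of h
  set e := h.factorization 7 with he
  have he1 : 7^e ∣ h := Nat.ordProj_dvd h 7
  have he2 : ¬ 7^(e+1) ∣ h := Nat.pow_succ_factorization_not_dvd hhpos (by norm_num)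
  set u := h / 7^e with hu
  have huh : 7^e * u = h := Nat.ordProj_mul_ordCompl_eq_self h 7
  have hnu : ¬ (7 ∣ u) := by
    intro ⟨w, hw⟩
    exact he2 ⟨w, by rw [← huh, hw, pow_succ]; ring⟩
  -- h = 3 * h3 with 7^e ∣ h3
  obtain ⟨h3, hh3⟩ : ∃ h3, h = 3 * h3 := ⟨h/3, by omega⟩
  have he3 : 7^e ∣ h3 := by
    have hcop : Nat.Coprime (7^e) 3 := Nat.Coprime.pow_left e (by norm_num)
    exact hcop.dvd_of_dvd_mul_left (by rw [← hh3]; exact he1)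
  -- (A) 7^(e+1) divides d q - d p  (as the 2-power side)
  have hA : (7:ℤ)^(e+1) ∣ d ((p'+1)+h) - d (p'+1) := by
    have h2h : ((8:ℤ))^h3 = 2^h := by rw [hh3, pow_mul]; norm_num
    have hlte := lte7 e h3 he3
    rw [h2h] at hlte
    obtain ⟨w, hw⟩ := hlte
    have hval : d ((p'+1)+h) - d (p'+1) = -2^p' * ((2:ℤ)^h - 1) := by
      rw [dq, dp]; ring
    exact ⟨-2^p' * w, by rw [hval, hw]; ring⟩
  -- addition formula
  have hadd : d ((p'+1)+h) - d (p'+1) = c (p'+1) * d h + d (p'+1) * (c h - 1) := by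
    rw [d_add]; ring
  -- (F1): d h = 7^e * d u * E, E % 7 = 1
  obtain ⟨E, hdE, hE7⟩ := d_val e u
  rw [huh] at hdE
  -- (F2): 7^(e+1) ∣ c h - 1
  have hF2 : (7:ℤ)^(e+1) ∣ c h - 1 := by
    have hnorm := norm_cd h
    have hA2 : (7:ℤ)^(e+1) ∣ 8^h - 1 := lte7 e h he1
    have hdd : (7:ℤ)^(e+1) ∣ 7 * d h ^ 2 := by
      have : (7:ℤ) * d h ^ 2 = 7^(2*e+1) * (d u * E)^2 := by
        rw [hdE]; ring
      rw [this]
      exact Dvd.dvd.mul_right (pow_dvd_pow 7 (by omega)) _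
    have hsq : (7:ℤ)^(e+1) ∣ (c h - 1) * (c h + 1) := by
      have : (c h - 1) * (c h + 1) = (8^h - 1) - 7 * d h^2 := by linear_combination hnorm
      rw [this]
      exact dvd_sub hA2 hdd
    have hc1 : ¬ (7:ℤ) ∣ (c h + 1) := by
      have := (cd_mod7 h).1
      omega
    have hcop : IsCoprime ((7:ℤ)^(e+1)) (c h + 1) :=
      IsCoprime.pow_left (((Int.prime_iff_natAbs_prime.mpr (by norm_num)).coprime_iff_not_dvd).mpr hc1)
    exact hcop.dvd_of_dvd_mul_right hsq
  -- combine: 7^(e+1) ∣ c (p'+1) * d h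
  have hfin : (7:ℤ)^(e+1) ∣ c (p'+1) * d h := by
    have h1 : (7:ℤ)^(e+1) ∣ d (p'+1) * (c h - 1) := Dvd.dvd.mul_left hF2 _
    have := dvd_sub (hadd ▸ hA) h1
    simpa using this
  -- contradiction
  have hrw : c (p'+1) * d h = 7^e * (c (p'+1) * d u * E) := by rw [hdE]; ring
  rw [hrw, pow_succ'] at hfin
  have h7W : (7:ℤ) ∣ c (p'+1) * d u * E := by
    have h70 : ((7:ℤ)^e) ≠ 0 := pow_ne_zero _ (by norm_num)
    obtain ⟨w, hw⟩ := hfin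
    refine ⟨w, mul_left_cancel₀ h70 ?_⟩
    rw [hw]; ring
  have hc7 : c (p'+1) % 7 = 1 := (cd_mod7 (p'+1)).1
  have hd7 : d u % 7 = (u:ℤ) % 7 := (cd_mod7 u).2
  have hu7 : ¬ ((7:ℤ) ∣ (u:ℤ)) := by
    intro hd
    exact hnu (Int.ofNat_dvd.mp (by exact_mod_cast hd))
  obtain ⟨w, hw⟩ := h7W
  have m1 : (c (p'+1) * d u) % 7 = ((c (p'+1) % 7) * (d u % 7)) % 7 := Int.mul_emod _ _ 7
  rw [hc7, hd7, one_mul] at m1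
  have m2 : (c (p'+1) * d u * E) % 7 = (((c (p'+1) * d u) % 7) * (E % 7)) % 7 := Int.mul_emod _ _ 7
  rw [hE7, mul_one, m1] at m2
  omega

private lemma part2 (m : ℕ) (hb : b m = -1) : m = 3 ∨ m = 5 ∨ m = 13 := by
  have hm3 : 3 ≤ m := by
    rcases Nat.lt_or_ge m 3 with h|h
    · interval_cases m <;> exact absurd hb (by decide)
    · exact h
  obtain ⟨m', rfl⟩ : ∃ m', m = m'+1 := ⟨m-1, by omega⟩
  have hd : d (m'+1) = -2^m' := by rw [(bridge m').2, hb]; ring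
  have hd7 : d (m'+1) % 7 = ((m'+1 : ℕ) : ℤ) % 7 := (cd_mod7 (m'+1)).2
  rw [hd] at hd7
  have h2p := two_pow_mod7 m'
  have hr : m' % 3 = 0 ∨ m' % 3 = 1 ∨ m' % 3 = 2 := by omega
  have goal21 : (m'+1) % 21 = 3 ∨ (m'+1) % 21 = 5 ∨ (m'+1) % 21 = 13 := by
    rcases hr with h|h|h <;> rw [h] at h2p <;> norm_num at h2p <;> omega
  have hb3 : b 3 = -1 := by decide
  have hb5 : b 5 = -1 := by decide
  have hb13 : b 13 = -1 := by decide
  rcases goal21 with h21|h21|h21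
  · have : m'+1 = 3 ∨ m'+1 ≥ 24 := by omega
    rcases this with h|h
    · left; omega
    · exact (uniq 3 (m'+1) (by norm_num) (by omega) hb3 hb (by omega)).elim
  · have : m'+1 = 5 ∨ m'+1 ≥ 26 := by omega
    rcases this with h|h
    · right; left; omega
    · exact (uniq 5 (m'+1) (by norm_num) (by omega) hb5 hb (by omega)).elim
  · have : m'+1 = 13 ∨ m'+1 ≥ 34 := by omega
    rcases this with h|h
    · right; right; omega
    · exact (uniq 13 (m'+1) (by norm_num) (by omega) hb13 hb (by omega)).elim

theorem pow_two_sub_seven_sq (n x : ℕ) (hn : ∃ k : ℕ, n = 2 ^ k)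
    (h : (n : ℤ) - 7 = (x : ℤ) ^ 2) :
    n = 8 ∨ n = 16 ∨ n = 32 ∨ n = 128 ∨ n = 32768 := by
  obtain ⟨k, rfl⟩ := hn
  have hcast : ((2^k : ℕ) : ℤ) = 2^k := by push_cast; ring
  have hx : (x:ℤ)^2 + 7 = 2^k := by rw [← hcast]; linarith [h]
  have hk3 : 3 ≤ k := by
    by_contra hc
    push_neg at hc
    interval_cases k <;> norm_num at hx <;> nlinarith [sq_nonneg (x:ℤ), hx]
  obtain ⟨j, rfl⟩ : ∃ j, k = j+3 := ⟨k-3, by omega⟩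
  have h2 : (2:ℤ)^(j+3) = 2*(2^(j+2)) := by ring
  have hodd : (x:ℤ) % 2 = 1 := by
    rcases Int.even_or_odd (x:ℤ) with ⟨a, ha⟩|⟨a, ha⟩
    · exfalso
      have hsq : (x:ℤ)^2 = 2*(2*(a*a)) := by rw [ha]; ring
      omega
    · omega
  have hin : (x:ℤ)^2 + 7*1^2 = 2^(j+3) := by rw [one_pow, mul_one]; exact hx
  obtain ⟨-, hy⟩ := descent j (x:ℤ) 1 hodd (by norm_num) hin
  have hb1 : b (j+1) = 1 ∨ b (j+1) = -1 := by rcases hy with h'|h' <;> omega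
  rcases hb1 with hb|hb
  · rcases part1 _ hb with h1|h1
    · left; rw [show j = 0 from by omega]; norm_num
    · right; left; rw [show j = 1 from by omega]; norm_num
  · rcases part2 _ hb with h1|h1|h1
    · right; right; left; rw [show j = 2 from by omega]; norm_num
    · right; right; right; left; rw [show j = 4 from by omega]; norm_num
    · right; right; right; right; rw [show j = 12 from by omega]; norm_num
end
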